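/- arXiv:2312.08550 — 5 statements merged into one kernel-verified Lean document; each statement's English description precedes it below -/
import Mathlib

section
/- Let A, B be d×d Hermitian positive semidefinite complex matrices. If the n-fold Kronecker (tensor) power A^{⊗n} equals B^{⊗n} for some n > 0, then A = B. -/
/-!
The diagonal entry `(A^{⊗n})_{(a,…,a),(a,…,a)} = A a a ^ n` determines the nonnegative number
`A a a`, and the entry `(A^{⊗n})_{(a,a,…,a),(b,a,…,a)} = A a b * A a a ^ (n - 1)` then determines
`A a b` as long as `A a a ≠ 0`. When `A a a = 0`, positive semidefiniteness forces the whole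
row `a` of `A` (and of `B`, whose diagonal agrees) to vanish.
-/

open scoped ComplexOrder

/-- The `n`-fold Kronecker (tensor) power of a `d×d` matrix, with entries
`(A^{⊗n})_{f,g} = ∏ i, A (f i) (g i)`. -/
def kronPow {d : ℕ} (n : ℕ) (A : Matrix (Fin d) (Fin d) ℂ) :
    Matrix (Fin n → Fin d) (Fin n → Fin d) ℂ :=
  Matrix.of fun f g => ∏ i, A (f i) (g i)

namespace Matrix.PosSemidef

variable {𝕜 n : Type*} [RCLike 𝕜] [Fintype n] {A : Matrix n n 𝕜}

theorem col_eq_zero_of_diag_eq_zero (hA : A.PosSemidef) {i : n} (hi : A i i = 0) :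
    A.col i = 0 := by
  classical
  rw [← mulVec_single_one, ← hA.dotProduct_mulVec_zero_iff]
  simpa using hi

theorem apply_eq_zero_of_diag_eq_zero (hA : A.PosSemidef) {i : n} (hi : A i i = 0) (j : n) :
    A i j = 0 := by
  rw [← hA.isHermitian.apply, star_eq_zero]
  exact congrFun (hA.col_eq_zero_of_diag_eq_zero hi) j

end Matrix.PosSemidef

theorem RCLike.pow_left_inj_of_nonneg {𝕜 : Type*} [RCLike 𝕜] {x y : 𝕜} {n : ℕ}
    (hx : 0 ≤ x) (hy : 0 ≤ y) (hn : n ≠ 0) : x ^ n = y ^ n ↔ x = y := by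
  obtain ⟨a, ha, rfl⟩ := RCLike.nonneg_iff_exists_ofReal.mp hx
  obtain ⟨b, hb, rfl⟩ := RCLike.nonneg_iff_exists_ofReal.mp hy
  simp only [← RCLike.ofReal_pow, RCLike.ofReal_inj]
  exact pow_left_inj₀ ha hb hn

section kronPow

variable {d : ℕ}

theorem kronPow_apply_const (n : ℕ) (A : Matrix (Fin d) (Fin d) ℂ) (i j : Fin d) :
    kronPow n A (fun _ => i) (fun _ => j) = A i j ^ n := by
  simp [kronPow]

theorem kronPow_succ_apply_cons (n : ℕ) (A : Matrix (Fin d) (Fin d) ℂ) (i j : Fin d)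
    (f g : Fin n → Fin d) :
    kronPow (n + 1) A (Fin.cons i f) (Fin.cons j g) = A i j * kronPow n A f g := by
  simp [kronPow, Fin.prod_univ_succ]

end kronPow

/-- Hermitian positive semidefinite matrices with equal `n`-th Kronecker powers
(`n > 0`) are equal. -/
theorem stmt1 {d : ℕ} (n : ℕ) (hn : 0 < n)
    (A B : Matrix (Fin d) (Fin d) ℂ)
    (hA : A.PosSemidef) (hB : B.PosSemidef)
    (h : kronPow n A = kronPow n B) : A = B := by
  obtain ⟨m, rfl⟩ := Nat.exists_eq_succ_of_ne_zero hn.ne'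
  have hdiag : ∀ i, A i i = B i i := fun i => by
    have hi := congr_fun₂ h (fun _ => i) (fun _ => i)
    rwa [kronPow_apply_const, kronPow_apply_const,
      RCLike.pow_left_inj_of_nonneg hA.diag_nonneg hB.diag_nonneg m.succ_ne_zero] at hi
  ext i j
  have hij := congr_fun₂ h (Fin.cons i fun _ => i) (Fin.cons j fun _ => i)
  rw [kronPow_succ_apply_cons, kronPow_succ_apply_cons, kronPow_apply_const,
    kronPow_apply_const, ← hdiag i] at hij
  by_cases hi : A i i = 0
  · rw [hA.apply_eq_zero_of_diag_eq_zero hi, hB.apply_eq_zero_of_diag_eq_zero (hdiag i ▸ hi)]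
  · exact mul_right_cancel₀ (pow_ne_zero m hi) hij
end

section
/- Let G be a finite group, V₁,…,V_k finite-dimensional complex Hilbert spaces, and for each i let Wᵢ : G → End(Vᵢ) be a family of operators. Suppose that for every g ∈ G and every i there exists ρᵢ(g) ∈ U(Vᵢ) such that Wᵢ(g⁻¹ h) = ρᵢ(g) Wᵢ(h) for all h ∈ G, and that the set {Wᵢ(g) : g ∈ G} spans End(Vᵢ) as a complex vector space. Then each ρᵢ : G → U(Vᵢ) is a group homomorphism, and Wᵢ(g) = Wᵢ(1) ρᵢ(g)⁻¹ for all g ∈ G (where Wᵢ(1) corresponds to the identity element, after identifying ρᵢ(g)⁻¹ = ρᵢ(g)ᴴ). -/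
/-!
Since the `W g` span the algebra, right multiplication is detected by them: if `W g * M = W g * N`
for all `g`, the linear maps `X ↦ X * M` and `X ↦ X * N` agree on a spanning set, hence at `X = 1`.
Comparing `W ((g h)⁻¹ x)` with `W (h⁻¹ (g⁻¹ x))` then makes `ρ` multiplicative, and unitarity turns
`ρ g⁻¹`, a right inverse of `ρ g`, into `(ρ g)ᴴ`.
-/

section SpanningFamily

variable {R A : Type*} [Semiring R] [Semiring A] [Module R A] [IsScalarTower R A A]

theorem eq_of_forall_mul_eq_of_span_range_eq_top {ι : Sort*} {W : ι → A}
    (hspan : Submodule.span R (Set.range W) = ⊤) {M N : A} (h : ∀ i, W i * M = W i * N) :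
    M = N := by
  have hmul : LinearMap.mulRight R M = LinearMap.mulRight R N := LinearMap.ext_on_range hspan h
  simpa using LinearMap.congr_fun hmul 1

variable {G : Type*} [Group G] {W ρ : G → A}

theorem map_mul_of_span_range_eq_top (hspan : Submodule.span R (Set.range W) = ⊤)
    (hact : ∀ g h, W (g⁻¹ * h) = W h * ρ g) (g h : G) : ρ (g * h) = ρ g * ρ h := by
  refine eq_of_forall_mul_eq_of_span_range_eq_top hspan fun x => ?_
  calc W x * ρ (g * h) = W (h⁻¹ * (g⁻¹ * x)) := by rw [← hact, mul_inv_rev, mul_assoc]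
    _ = W x * (ρ g * ρ h) := by rw [hact, hact, mul_assoc]

theorem map_one_of_span_range_eq_top (hspan : Submodule.span R (Set.range W) = ⊤)
    (hact : ∀ g h, W (g⁻¹ * h) = W h * ρ g) : ρ 1 = 1 :=
  eq_of_forall_mul_eq_of_span_range_eq_top hspan fun x => by rw [← hact, inv_one, one_mul, mul_one]

theorem map_inv_eq_star_of_span_range_eq_top [StarMul A]
    (hspan : Submodule.span R (Set.range W) = ⊤) (hact : ∀ g h, W (g⁻¹ * h) = W h * ρ g)
    (hρu : ∀ g, ρ g ∈ unitary A) (g : G) : ρ g⁻¹ = star (ρ g) := by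
  have hright : ρ g * ρ g⁻¹ = 1 := by
    rw [← map_mul_of_span_range_eq_top hspan hact, mul_inv_cancel,
      map_one_of_span_range_eq_top hspan hact]
  exact (left_inv_eq_right_inv (Unitary.star_mul_self_of_mem (hρu g)) hright).symm

theorem apply_eq_apply_one_mul_map_inv (hact : ∀ g h, W (g⁻¹ * h) = W h * ρ g) (g : G) :
    W g = W 1 * ρ g⁻¹ := by
  simpa using hact g⁻¹ 1

end SpanningFamily

theorem stmt5_general {G : Type*} [Group G] {k : ℕ} (d : Fin k → ℕ)
    (W : ∀ i, G → Matrix (Fin (d i)) (Fin (d i)) ℂ)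
    (ρ : ∀ i, G → Matrix (Fin (d i)) (Fin (d i)) ℂ)
    (hρu : ∀ i g, ρ i g ∈ Matrix.unitaryGroup (Fin (d i)) ℂ)
    (hact : ∀ i (g h : G), W i (g⁻¹ * h) = W i h * ρ i g)
    (hspan : ∀ i, Submodule.span ℂ (Set.range (W i)) = ⊤) :
    (∀ i (g h : G), ρ i (g * h) = ρ i g * ρ i h) ∧
    (∀ i (g : G), W i g = W i 1 * (ρ i g).conjTranspose) := by
  refine ⟨fun i => map_mul_of_span_range_eq_top (hspan i) (hact i), fun i g => ?_⟩
  rw [apply_eq_apply_one_mul_map_inv (hact i), map_inv_eq_star_of_span_range_eq_top (hspan i) (hact i)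
    (hρu i), Matrix.star_eq_conjTranspose]

/-- If `W i : G → End(V i)` satisfies `(g · W i) = ρ i g · W i`, i.e.
`W i (g⁻¹ h) = W i h * ρ i g` for unitaries `ρ i g`, and `{W i g}_g` spans
`End(V i)`, then each `ρ i` is a group homomorphism and
`W i g = W i 1 * (ρ i g)ᴴ`. -/
theorem stmt5 {G : Type*} [Group G] [Fintype G] {k : ℕ} (d : Fin k → ℕ)
    (W : ∀ i, G → Matrix (Fin (d i)) (Fin (d i)) ℂ)
    (ρ : ∀ i, G → Matrix (Fin (d i)) (Fin (d i)) ℂ)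
    (hρu : ∀ i g, ρ i g ∈ Matrix.unitaryGroup (Fin (d i)) ℂ)
    (hact : ∀ i (g h : G), W i (g⁻¹ * h) = W i h * ρ i g)
    (hspan : ∀ i, Submodule.span ℂ (Set.range (W i)) = ⊤) :
    (∀ i (g h : G), ρ i (g * h) = ρ i g * ρ i h) ∧
    (∀ i (g : G), W i g = W i 1 * (ρ i g).conjTranspose) :=
  stmt5_general d W ρ hρu hact hspan
end

section
/- Let G be a finite commutative group, n even, and x, y ∈ ℝ^G ⊆ ℂ[G] with all Fourier coefficients nonzero. If β_{ρ̲}(x) = β_{ρ̲}(y) for all tuples ρ̲ = (ρ₁,…,ρₙ) ∈ Ĝⁿ, where β_{ρ̲}(z) = ẑ_{ρ₁} ⋯ ẑ_{ρₙ} conj(ẑ_{ρ₁⋯ρₙ}), then x = g·y for some g ∈ G. -/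
/-!
The ratio `η ρ = x̂ ρ / ŷ ρ` turns the equality of spectra into
`∏ η (ρⱼ) * conj (η (∏ ρⱼ)) = 1`. With all `ρⱼ` trivial, the real number `η 1` satisfies
`η 1 ^ (n + 1) = 1` with `n + 1` odd, so `η 1 = 1`; padding with trivial characters (`n ≥ 2`)
then gives `|η| = 1` and `η (ρ * σ) = η ρ * η σ`. Thus `η` is a character of the dual group, so
by Pontryagin duality `η ρ = conj (ρ g)` for some `g`, i.e. `x̂` is the transform of `g • y`,
and Fourier inversion gives `x = g • y`.
-/

/-- The Fourier transform of `x : G → ℂ` at a character `ρ : G →* ℂ`. -/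
noncomputable def fhat {G : Type*} [CommGroup G] [Fintype G]
    (x : G → ℂ) (ρ : G →* ℂ) : ℂ :=
  ∑ g : G, (starRingEnd ℂ) (ρ g) * x g

open ComplexConjugate

theorem Complex.eq_one_of_conj_eq_of_pow_eq_one {z : ℂ} {k : ℕ} (hk : Odd k)
    (hconj : conj z = z) (hz : z ^ k = 1) : z = 1 := by
  obtain ⟨r, rfl⟩ := Complex.conj_eq_iff_real.1 hconj
  have hr : r ^ k = 1 ^ k := by rw [one_pow]; exact_mod_cast hz
  rw [hk.strictMono_pow.injective hr, Complex.ofReal_one]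

theorem exists_monoidHom_of_prod_mul_conj_eq_one {M : Type*} [CommMonoid M] {n : ℕ}
    (hn : Even n) (hn0 : 0 < n) {η : M → ℂ} (hη1 : conj (η 1) = η 1)
    (hη : ∀ ρs : Fin n → M, (∏ j, η (ρs j)) * conj (η (∏ j, ρs j)) = 1) :
    ∃ χ : M →* ℂ, ∀ a, χ a = η a := by
  obtain ⟨m, rfl⟩ : ∃ m, n = m + 2 := ⟨n - 2, by obtain ⟨k, rfl⟩ := hn; omega⟩
  have hone : η 1 = 1 := by
    refine Complex.eq_one_of_conj_eq_of_pow_eq_one hn.add_one hη1 ?_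
    simpa [pow_succ, hη1] using hη fun _ => 1
  have hpair : ∀ a b, η a * η b * conj (η (a * b)) = 1 := fun a b => by
    simpa [Fin.prod_univ_succ, hone] using hη (Fin.cons a (Fin.cons b fun _ => 1))
  have hunit : ∀ a, η a * conj (η a) = 1 := fun a => by simpa [hone] using hpair a 1
  refine ⟨{ toFun := η, map_one' := hone, map_mul' := fun a b => ?_ }, fun _ => rfl⟩
  linear_combination (-η (a * b)) * hpair a b + η a * η b * hunit (a * b)

theorem MonoidHom.eval_surjective {G : Type*} [CommGroup G] [Finite G] :
    Function.Surjective (MonoidHom.eval : G →* (G →* ℂ) →* ℂ) := by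
  intro η
  let e : AddChar (Additive G) ℂ ≃* (G →* ℂ) := AddChar.toMonoidHomMulEquiv
  obtain ⟨a, ha⟩ := AddChar.doubleDualEmb_bijective.surjective
    (AddChar.toMonoidHomEquiv.symm (η.comp e.toMonoidHom) : AddChar (AddChar (Additive G) ℂ) ℂ)
  refine ⟨a.toMul, MonoidHom.ext fun ρ => ?_⟩
  exact (DFunLike.congr_fun ha (e.symm ρ)).trans (congrArg η (e.apply_symm_apply ρ))

section Fourier

variable {G : Type*} [CommGroup G] [Fintype G]

theorem fhat_one (u : G → ℂ) : fhat u 1 = ∑ g, u g := by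
  simp [fhat]

theorem fhat_sub (u v : G → ℂ) (ρ : G →* ℂ) : fhat (u - v) ρ = fhat u ρ - fhat v ρ := by
  simp only [fhat, Pi.sub_apply, mul_sub, Finset.sum_sub_distrib]

theorem fhat_comp_mul_left (u : G → ℂ) (g : G) (ρ : G →* ℂ) :
    fhat (fun h => u (g⁻¹ * h)) ρ = conj (ρ g) * fhat u ρ := by
  rw [fhat, fhat, Finset.mul_sum]
  refine Fintype.sum_equiv (Equiv.mulLeft g⁻¹) _ _ fun h => ?_
  rw [Equiv.coe_mulLeft, ← mul_assoc, ← map_mul, ← map_mul, mul_inv_cancel_left]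

theorem eq_zero_of_forall_fhat_eq_zero {w : G → ℂ} (hw : ∀ ρ, fhat w ρ = 0) : w = 0 := by
  classical
  -- `L` vanishes on the basis of characters, hence also on each `Pi.single`.
  let L : (Additive G → ℂ) →ₗ[ℂ] ℂ := Fintype.linearCombination ℂ fun a => conj (w a.toMul)
  have hL : L = 0 := (AddChar.complexBasis (Additive G)).ext fun ψ => by
    have := congrArg conj (hw (AddChar.toMonoidHomMulEquiv ψ))
    simp only [fhat, map_sum, map_mul, Complex.conj_conj, map_zero] at this
    rw [AddChar.complexBasis_apply, Fintype.linearCombination_apply, LinearMap.zero_apply]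
    exact (Fintype.sum_equiv Additive.toMul _ _ fun _ => rfl).trans this
  funext g
  simpa [L, Fintype.linearCombination_apply_single] using
    LinearMap.congr_fun hL (Pi.single (Additive.ofMul g) 1)

theorem fhat_injective : Function.Injective (fhat (G := G)) := fun u v huv =>
  sub_eq_zero.1 <| eq_zero_of_forall_fhat_eq_zero fun ρ => by
    rw [fhat_sub, congrFun huv ρ, sub_self]

end Fourier

theorem stmt11_general {G : Type*} [CommGroup G] [Fintype G]
    (n : ℕ) (hn : Even n) (hn0 : 0 < n)
    (x y : G → ℝ)
    (hy : ∀ ρ : G →* ℂ, fhat (fun g => (y g : ℂ)) ρ ≠ 0)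
    (hβ : ∀ ρs : Fin n → (G →* ℂ),
      (∏ j, fhat (fun g => (x g : ℂ)) (ρs j)) *
        (starRingEnd ℂ) (fhat (fun g => (x g : ℂ)) (∏ j, ρs j))
      = (∏ j, fhat (fun g => (y g : ℂ)) (ρs j)) *
        (starRingEnd ℂ) (fhat (fun g => (y g : ℂ)) (∏ j, ρs j))) :
    ∃ g : G, ∀ h : G, x h = y (g⁻¹ * h) := by
  set X := fhat fun g => (x g : ℂ)
  set Y := fhat fun g => (y g : ℂ)
  have hratio : ∀ ρs : Fin n → (G →* ℂ),
      (∏ j, X (ρs j) / Y (ρs j)) * conj (X (∏ j, ρs j) / Y (∏ j, ρs j)) = 1 := fun ρs => by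
    rw [Finset.prod_div_distrib, map_div₀, div_mul_div_comm, div_eq_one_iff_eq <|
      mul_ne_zero (Finset.prod_ne_zero_iff.2 fun j _ => hy _) ((map_ne_zero _).2 (hy _))]
    exact hβ ρs
  have hreal : conj (X 1 / Y 1) = X 1 / Y 1 := by
    simp only [X, Y, fhat_one, ← Complex.ofReal_sum, ← Complex.ofReal_div, Complex.conj_ofReal]
  obtain ⟨η, hη⟩ :=
    exists_monoidHom_of_prod_mul_conj_eq_one (η := fun ρ => X ρ / Y ρ) hn hn0 hreal hratio
  obtain ⟨g, hg⟩ := MonoidHom.eval_surjective ((starRingEnd ℂ).toMonoidHom.comp η)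
  have htranslate : (fun h => (x h : ℂ)) = fun h => (y (g⁻¹ * h) : ℂ) :=
    fhat_injective <| funext fun ρ => by
      have hρg : conj (ρ g) = X ρ / Y ρ := by
        rw [← hη, ← Complex.conj_conj (η ρ)]
        exact congrArg conj (DFunLike.congr_fun hg ρ)
      rw [fhat_comp_mul_left (fun h => (y h : ℂ)), hρg, div_mul_cancel₀ _ (hy ρ)]
  exact ⟨g, fun h => by exact_mod_cast congrFun htranslate h⟩

/-- Completeness of even-order spectra: if `x, y ∈ ℝ^G` have nowhere-vanishing
Fourier coefficients and all their spectra of even order `n > 0` agree, then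
`x = g · y` for some `g ∈ G`. -/
theorem stmt11 {G : Type*} [CommGroup G] [Fintype G]
    (n : ℕ) (hn : Even n) (hn0 : 0 < n)
    (x y : G → ℝ)
    (hx : ∀ ρ : G →* ℂ, fhat (fun g => (x g : ℂ)) ρ ≠ 0)
    (hy : ∀ ρ : G →* ℂ, fhat (fun g => (y g : ℂ)) ρ ≠ 0)
    (hβ : ∀ ρs : Fin n → (G →* ℂ),
      (∏ j, fhat (fun g => (x g : ℂ)) (ρs j)) *
        (starRingEnd ℂ) (fhat (fun g => (x g : ℂ)) (∏ j, ρs j))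
      = (∏ j, fhat (fun g => (y g : ℂ)) (ρs j)) *
        (starRingEnd ℂ) (fhat (fun g => (y g : ℂ)) (∏ j, ρs j))) :
    ∃ g : G, ∀ h : G, x h = y (g⁻¹ * h) :=
  stmt11_general n hn hn0 x y hy hβ
end

section
/- Let σ : ℂ → ℂ be continuous with coercivity: there exist C > 0 and n ∈ ℕ such that |σ(0) − σ(x)| ≥ C|x|ⁿ for all x ∈ ℂ. Let W, W' ∈ ℂ^d be unit-norm vectors (or of equal norm, normalized) such that sup_{‖x‖=1} |σ(⟨W,x⟩) − σ(⟨W',x⟩)| ≤ δ < C. Then there exists ρ ∈ ℂ with |ρ| = 1 such that ‖W − ρW'‖ ≤ √(2(1 − √(1 − (δ/C)^{2/n}))). -/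
/-!
On the hyperplane `W'ᗮ` the second neuron is the constant `σ 0`, so coercivity bounds
`‖⟪W, x⟫‖ ≤ (δ / C) ^ (1 / n)` for unit `x ⟂ W'`. A unit vector whose inner products with the
unit vectors of `W'ᗮ` are at most `ε` satisfies `‖⟪W, W'⟫‖ ≥ √(1 - ε²)`, and rotating `W'` by the
phase of `⟪W, W'⟫` gives `‖W - ρ • W'‖² = 2 - 2 ‖⟪W, W'⟫‖`.
-/

open RCLike
open scoped InnerProductSpace ComplexConjugate

section

variable {𝕜 E : Type*} [RCLike 𝕜] [NormedAddCommGroup E] [InnerProductSpace 𝕜 E]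

theorem RCLike.exists_norm_eq_one_mul_eq_norm (z : 𝕜) : ∃ ρ : 𝕜, ‖ρ‖ = 1 ∧ ρ * z = ‖z‖ := by
  rcases eq_or_ne z 0 with rfl | hz
  · exact ⟨1, norm_one, by simp⟩
  · refine ⟨conj z / ‖z‖, ?_, ?_⟩
    · simp [norm_div, hz]
    · rw [div_mul_eq_mul_div, conj_mul, ← ofReal_pow, sq, ofReal_mul,
        mul_div_assoc, div_self (by simpa using hz), mul_one]

theorem exists_norm_eq_one_norm_sub_smul_sq {v w : E} (hv : ‖v‖ = 1) (hw : ‖w‖ = 1) :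
    ∃ ρ : 𝕜, ‖ρ‖ = 1 ∧ ‖v - ρ • w‖ ^ 2 = 2 - 2 * ‖⟪v, w⟫_𝕜‖ := by
  obtain ⟨ρ, hρ, hρvw⟩ := exists_norm_eq_one_mul_eq_norm ⟪v, w⟫_𝕜
  refine ⟨ρ, hρ, ?_⟩
  rw [@norm_sub_sq 𝕜, inner_smul_right, hρvw, ofReal_re, norm_smul, hρ, hv, hw]
  ring

/-- Splitting `v = ⟪w, v⟫ • w + u` with `u ⟂ w`, the hypothesis at `x = u / ‖u‖` gives `‖u‖ ≤ ε`,
and Pythagoras gives `‖v‖² = ‖⟪w, v⟫‖² + ‖u‖²`. -/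
theorem one_sub_sq_le_norm_inner_sq {v w : E} {ε : ℝ} (hv : ‖v‖ = 1) (hw : ‖w‖ = 1)
    (h : ∀ x : E, ‖x‖ = 1 → ⟪w, x⟫_𝕜 = 0 → ‖⟪v, x⟫_𝕜‖ ≤ ε) :
    1 - ε ^ 2 ≤ ‖⟪v, w⟫_𝕜‖ ^ 2 := by
  set c := ⟪w, v⟫_𝕜
  set u := v - c • w
  have hwu : ⟪w, u⟫_𝕜 = 0 := by
    simp [u, inner_sub_right, inner_smul_right, inner_self_eq_norm_sq_to_K, hw, c]
  have hv_decomp : c • w + u = v := add_sub_cancel _ _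
  have hpyth : 1 = ‖c‖ ^ 2 + ‖u‖ ^ 2 := by
    have := norm_add_sq_eq_norm_sq_add_norm_sq_of_inner_eq_zero (c • w) u
      (by rw [inner_smul_left, hwu, mul_zero])
    rw [hv_decomp, hv, norm_smul, hw] at this
    linarith
  have hu : ‖u‖ ^ 2 ≤ ε ^ 2 := by
    rcases eq_or_ne u 0 with hu0 | hu0
    · simp [hu0, sq_nonneg]
    have hu_pos : 0 < ‖u‖ := norm_pos_iff.2 hu0
    have hvu : ⟪v, u⟫_𝕜 = (‖u‖ : 𝕜) ^ 2 := by
      rw [← hv_decomp, inner_add_left, inner_smul_left, hwu, mul_zero, zero_add,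
        inner_self_eq_norm_sq_to_K]
    have hx : ‖(‖u‖ : 𝕜)⁻¹ • u‖ = 1 := by
      rw [norm_smul, norm_inv, norm_ofReal, abs_of_pos hu_pos, inv_mul_cancel₀ hu_pos.ne']
    have := h _ hx (by rw [inner_smul_right, hwu, mul_zero])
    rw [inner_smul_right, hvu, norm_mul, norm_inv, norm_pow, norm_ofReal, abs_of_pos hu_pos] at this
    have hε : ‖u‖ ≤ ε := by
      rwa [sq, ← mul_assoc, inv_mul_cancel₀ hu_pos.ne', one_mul] at this
    exact pow_le_pow_left₀ hu_pos.le hε 2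
  rw [norm_inner_symm]
  linarith

theorem exists_norm_eq_one_norm_sub_smul_le {v w : E} {ε : ℝ} (hv : ‖v‖ = 1) (hw : ‖w‖ = 1)
    (h : ∀ x : E, ‖x‖ = 1 → ⟪w, x⟫_𝕜 = 0 → ‖⟪v, x⟫_𝕜‖ ≤ ε) :
    ∃ ρ : 𝕜, ‖ρ‖ = 1 ∧ ‖v - ρ • w‖ ≤ √(2 * (1 - √(1 - ε ^ 2))) := by
  obtain ⟨ρ, hρ, hdist⟩ := exists_norm_eq_one_norm_sub_smul_sq (𝕜 := 𝕜) hv hw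
  refine ⟨ρ, hρ, Real.le_sqrt_of_sq_le ?_⟩
  have : √(1 - ε ^ 2) ≤ ‖⟪v, w⟫_𝕜‖ :=
    (Real.sqrt_le_left (norm_nonneg _)).2 (one_sub_sq_le_norm_inner_sq hv hw h)
  linarith

end

theorem norm_le_rpow_inv_of_le_norm_sub {X F : Type*} [SeminormedAddCommGroup X]
    [SeminormedAddCommGroup F] {σ : X → F} {C δ : ℝ} {n : ℕ} (hC : 0 < C) (hn : n ≠ 0)
    (hcoer : ∀ z, C * ‖z‖ ^ n ≤ ‖σ 0 - σ z‖) {z : X} (hz : ‖σ z - σ 0‖ ≤ δ) :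
    ‖z‖ ≤ (δ / C) ^ (n⁻¹ : ℝ) := by
  have hpow : ‖z‖ ^ n ≤ δ / C := by
    rw [le_div_iff₀ hC, mul_comm]
    exact (hcoer z).trans ((norm_sub_rev _ _).trans_le hz)
  calc ‖z‖ = (‖z‖ ^ n) ^ (n⁻¹ : ℝ) := (Real.pow_rpow_inv_natCast (norm_nonneg z) hn).symm
    _ ≤ (δ / C) ^ (n⁻¹ : ℝ) := Real.rpow_le_rpow (by positivity) hpow (by positivity)

theorem stmt15_general {dim : ℕ} (σ : ℂ → ℂ)
    (C : ℝ) (hC : 0 < C) (n : ℕ)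
    (hcoer : ∀ z : ℂ, C * ‖z‖ ^ n ≤ ‖σ 0 - σ z‖)
    (W W' : EuclideanSpace ℂ (Fin dim)) (hW : ‖W‖ = 1) (hW' : ‖W'‖ = 1)
    (δ : ℝ) (hδ0 : 0 ≤ δ)
    (hsup : ∀ x : EuclideanSpace ℂ (Fin dim), ‖x‖ = 1 →
      ‖σ (inner ℂ W x) - σ (inner ℂ W' x)‖ ≤ δ) :
    ∃ ρ : ℂ, ‖ρ‖ = 1 ∧
      ‖W - ρ • W'‖ ≤ Real.sqrt (2 * (1 - Real.sqrt (1 - (δ / C) ^ ((2 : ℝ) / n)))) := by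
  have hn : n ≠ 0 := by
    rintro rfl
    exact hC.not_ge (by simpa using hcoer 0)
  have horth (x : EuclideanSpace ℂ (Fin dim)) (hx : ‖x‖ = 1) (hW'x : ⟪W', x⟫_ℂ = 0) :
      ‖⟪W, x⟫_ℂ‖ ≤ (δ / C) ^ (n⁻¹ : ℝ) :=
    norm_le_rpow_inv_of_le_norm_sub hC hn hcoer (hW'x ▸ hsup x hx)
  obtain ⟨ρ, hρ, hdist⟩ := exists_norm_eq_one_norm_sub_smul_le hW hW' horth
  refine ⟨ρ, hρ, hdist.trans_eq ?_⟩
  rw [← Real.rpow_natCast, ← Real.rpow_mul (div_nonneg hδ0 hC.le), Nat.cast_ofNat,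
    inv_mul_eq_div]

/-- Unitarity-defect bound for McCulloch–Pitts neurons: if `σ : ℂ → ℂ` is
continuous and coercive (`|σ(0) − σ(x)| ≥ C|x|ⁿ`), `W, W'` are unit vectors,
and `|σ(⟨W,x⟩) − σ(⟨W',x⟩)| ≤ δ < C` for all unit `x`, then there is a
unimodular `ρ` with `‖W − ρW'‖ ≤ √(2(1 − √(1 − (δ/C)^{2/n})))`. -/
theorem stmt15 {dim : ℕ} (σ : ℂ → ℂ) (hσc : Continuous σ)
    (C : ℝ) (hC : 0 < C) (n : ℕ)
    (hcoer : ∀ z : ℂ, C * ‖z‖ ^ n ≤ ‖σ 0 - σ z‖)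
    (W W' : EuclideanSpace ℂ (Fin dim)) (hW : ‖W‖ = 1) (hW' : ‖W'‖ = 1)
    (δ : ℝ) (hδ0 : 0 ≤ δ) (hδC : δ < C)
    (hsup : ∀ x : EuclideanSpace ℂ (Fin dim), ‖x‖ = 1 →
      ‖σ (inner ℂ W x) - σ (inner ℂ W' x)‖ ≤ δ) :
    ∃ ρ : ℂ, ‖ρ‖ = 1 ∧
      ‖W - ρ • W'‖ ≤ Real.sqrt (2 * (1 - Real.sqrt (1 - (δ / C) ^ ((2 : ℝ) / n)))) :=
  stmt15_general σ C hC n hcoer W W' hW hW' δ hδ0 hsup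
end

section
/- Let σ : ℂ → Y be a function such that 0 is isolated in its fiber: there is an open set O ⊆ ℂ with σ⁻¹(σ(0)) ∩ O = {0}. Let W, W' ∈ ℂ^d be nonzero vectors of equal norm such that σ(⟨W,x⟩) = σ(⟨W',x⟩) for all x ∈ ℂ^d. Then W = ρ W' for some ρ ∈ ℂ with |ρ| = 1. -/
open Filter Topology LinearMap

theorem LinearMap.ker_le_ker_of_comp_eq {𝕜 E Y : Type*} [NontriviallyNormedField 𝕜]
    [AddCommGroup E] [Module 𝕜 E] {σ : 𝕜 → Y} (hσ : ∀ᶠ z in 𝓝[≠] 0, σ z ≠ σ 0)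
    {f g : E →ₗ[𝕜] 𝕜} (h : ∀ x, σ (f x) = σ (g x)) : ker g ≤ ker f := by
  intro x hx
  rw [mem_ker] at hx ⊢
  by_contra hfx
  -- Rescaling `x` moves `f x` into any punctured neighbourhood of `0` while keeping `g x = 0`.
  have hscale : Tendsto (· * f x) (𝓝[≠] 0) (𝓝[≠] 0) := by
    refine tendsto_nhdsWithin_of_tendsto_nhds_of_eventually_within _ ?_ ?_
    · exact ((continuous_mul_const (f x)).tendsto' 0 0 (zero_mul _)).mono_left nhdsWithin_le_nhds
    · filter_upwards [self_mem_nhdsWithin] with t ht using mul_ne_zero ht hfx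
  obtain ⟨t, ht⟩ := (hscale.eventually hσ).exists
  apply ht
  simpa [hx, mul_comm] using h (t • x)

theorem LinearMap.exists_eq_smul_of_ker_le {𝕜 E : Type*} [Field 𝕜] [AddCommGroup E] [Module 𝕜 E]
    {f g : E →ₗ[𝕜] 𝕜} (h : ker g ≤ ker f) : ∃ c : 𝕜, f = c • g := by
  have hspan := mem_span_of_iInf_ker_le_ker (L := fun _ : Unit ↦ g) (by simpa using h)
  rw [Set.range_const, Submodule.mem_span_singleton] at hspan
  obtain ⟨c, hc⟩ := hspan
  exact ⟨c, hc.symm⟩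

theorem exists_norm_eq_one_smul_eq_of_norm_eq {𝕜 E : Type*} [NormedField 𝕜]
    [NormedAddCommGroup E] [NormedSpace 𝕜 E] {v w : E} {c : 𝕜} (hc : v = c • w)
    (hn : ‖v‖ = ‖w‖) : ∃ ρ : 𝕜, ‖ρ‖ = 1 ∧ v = ρ • w := by
  rcases eq_or_ne w 0 with rfl | hw
  · exact ⟨1, norm_one, by simpa using hn⟩
  · refine ⟨c, ?_, hc⟩
    rw [hc, norm_smul] at hn
    exact (mul_eq_right₀ (norm_ne_zero_iff.mpr hw)).mp hn

theorem exists_eq_smul_of_forall_comp_dotProduct_eq {𝕜 ι Y : Type*} [NontriviallyNormedField 𝕜]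
    [Fintype ι] [DecidableEq ι] {σ : 𝕜 → Y} (hσ : ∀ᶠ z in 𝓝[≠] 0, σ z ≠ σ 0) {v w : ι → 𝕜}
    (h : ∀ x, σ (v ⬝ᵥ x) = σ (w ⬝ᵥ x)) : ∃ c : 𝕜, v = c • w := by
  obtain ⟨c, hc⟩ := exists_eq_smul_of_ker_le <| ker_le_ker_of_comp_eq hσ
    (f := dotProductBilin 𝕜 𝕜 v) (g := dotProductBilin 𝕜 𝕜 w) h
  refine ⟨c, funext fun j ↦ ?_⟩
  simpa using LinearMap.congr_fun hc (Pi.single j 1)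

theorem stmt16_general {dim : ℕ} {Y : Type*} (σ : ℂ → Y)
    (O : Set ℂ) (hO : IsOpen O) (h0O : (0 : ℂ) ∈ O)
    (hfiber : ∀ z ∈ O, σ z = σ 0 → z = 0)
    (W W' : EuclideanSpace ℂ (Fin dim))
    (hnorm : ‖W‖ = ‖W'‖)
    (heq : ∀ x : EuclideanSpace ℂ (Fin dim),
      σ (∑ i, W i * x i) = σ (∑ i, W' i * x i)) :
    ∃ ρ : ℂ, ‖ρ‖ = 1 ∧ W = ρ • W' := by
  have hσ : ∀ᶠ z in 𝓝[≠] 0, σ z ≠ σ 0 := by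
    filter_upwards [nhdsWithin_le_nhds (hO.mem_nhds h0O), self_mem_nhdsWithin] with z hzO hz
    exact mt (hfiber z hzO) hz
  obtain ⟨c, hc⟩ := exists_eq_smul_of_forall_comp_dotProduct_eq hσ fun x ↦ heq (WithLp.toLp 2 x)
  exact exists_norm_eq_one_smul_eq_of_norm_eq (congrArg (WithLp.toLp 2) hc) hnorm

/-- If `0` is isolated in its `σ`-fiber, and two nonzero equal-norm weight
vectors `W, W'` define the same function `x ↦ σ(⟨W,x⟩)`, then `W = ρ W'` for
some unimodular `ρ ∈ ℂ`. -/
theorem stmt16 {dim : ℕ} {Y : Type*} (σ : ℂ → Y)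
    (O : Set ℂ) (hO : IsOpen O) (h0O : (0 : ℂ) ∈ O)
    (hfiber : ∀ z ∈ O, σ z = σ 0 → z = 0)
    (W W' : EuclideanSpace ℂ (Fin dim)) (hWne : W ≠ 0) (hW'ne : W' ≠ 0)
    (hnorm : ‖W‖ = ‖W'‖)
    (heq : ∀ x : EuclideanSpace ℂ (Fin dim),
      σ (∑ i, W i * x i) = σ (∑ i, W' i * x i)) :
    ∃ ρ : ℂ, ‖ρ‖ = 1 ∧ W = ρ • W' :=
  stmt16_general σ O hO h0O hfiber W W' hnorm heq
end
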